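/- Let X be a Banach space and (Y_n)_{n∈ℕ} a sequence of closed linear subspaces of X such that each Y_n is weakly compactly generated and the linear span of ⋃_{n∈ℕ} Y_n is dense in X. Then X is weakly compactly generated. -/

import Mathlib

/-!
Pick weakly compact sets `Kₙ` generating `Yₙ`. By the uniform boundedness principle they are
norm bounded, so there are scalars `cₙ ≠ 0` with `cₙ • Kₙ → 0` uniformly in norm, hence also in
the weak topology. Then `{0} ∪ ⋃ₙ cₙ • Kₙ` is weakly compact, since every weak neighbourhood of
`0` contains all but finitely many of the pieces, and its span contains every `Kₙ`, so its closure
contains every `Yₙ` and hence their span.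
-/

open Set Filter Topology Pointwise Bornology

theorem isCompact_insert_iUnion_of_tendsto_smallSets {X : Type*} [TopologicalSpace X]
    {B : ℕ → Set X} {p : X} (hB : ∀ n, IsCompact (B n))
    (hBp : Tendsto B atTop (𝓝 p).smallSets) : IsCompact (insert p (⋃ n, B n)) := by
  refine isCompact_iff_ultrafilter_le_nhds.2 fun F hF ↦ ?_
  by_cases hmem : ∃ n, B n ∈ F
  · obtain ⟨n, hn⟩ := hmem
    obtain ⟨x, hx, hFx⟩ := (hB n).ultrafilter_le_nhds F (le_principal_iff.2 hn)
    exact ⟨x, mem_insert_of_mem _ (mem_iUnion_of_mem n hx), hFx⟩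
  push Not at hmem
  refine ⟨p, mem_insert _ _, fun U hU ↦ ?_⟩
  obtain ⟨N, hN⟩ := eventually_atTop.1 (tendsto_smallSets_iff.1 hBp U hU)
  have hfar : (⋂ n ∈ Finset.range N, (B n)ᶜ) ∈ F :=
    (biInter_finset_mem _).2 fun n _ ↦ Ultrafilter.compl_mem_iff_notMem.2 (hmem n)
  filter_upwards [le_principal_iff.1 hF, hfar] with x hx hxfar
  rcases hx with rfl | hx
  · exact mem_of_mem_nhds hU
  obtain ⟨n, hxn⟩ := mem_iUnion.1 hx
  have hNn : N ≤ n := not_lt.1 fun hn ↦ mem_iInter₂.1 hxfar n (Finset.mem_range.2 hn) hxn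
  exact hN n hNn hxn

theorem exists_ne_zero_smul_tendsto_smallSets {𝕜 E : Type*} [NontriviallyNormedField 𝕜]
    [AddCommGroup E] [Module 𝕜 E] [TopologicalSpace E] [FirstCountableTopology E]
    {A : ℕ → Set E} (hA : ∀ n, IsVonNBounded 𝕜 (A n)) :
    ∃ c : ℕ → 𝕜, (∀ n, c n ≠ 0) ∧ Tendsto (fun n ↦ c n • A n) atTop (𝓝 0).smallSets := by
  obtain ⟨U, hU⟩ := (𝓝 (0 : E)).exists_antitone_basis
  have hsmall n : ∃ c : 𝕜, c ≠ 0 ∧ c • A n ⊆ U n :=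
    ((tendsto_smallSets_iff.1 ((hA n).tendsto_smallSets_nhds.mono_left
      (nhdsWithin_le_nhds (s := {(0 : 𝕜)}ᶜ))) (U n) (hU.mem n)).and
      self_mem_nhdsWithin).exists.imp fun _ h ↦ ⟨h.2, h.1⟩
  choose c hc0 hcU using hsmall
  refine ⟨c, hc0, tendsto_smallSets_iff.2 fun t ht ↦ ?_⟩
  obtain ⟨k, hk⟩ := hU.mem_iff.1 ht
  exact eventually_atTop.2 ⟨k, fun n hn ↦ (hcU n).trans ((hU.antitone hn).trans hk)⟩

section WeakTopology

variable {𝕜 E F : Type*} [RCLike 𝕜] [NormedAddCommGroup E] [NormedSpace 𝕜 E]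
  [NormedAddCommGroup F] [NormedSpace 𝕜 F]

theorem isBounded_of_isCompact_image_toWeakSpaceCLM {S : Set E}
    (hS : IsCompact (toWeakSpaceCLM 𝕜 E '' S)) : IsBounded S := by
  have hvN := (hS.image (NormedSpace.inclusionInDoubleDualWeak 𝕜 E).continuous).isVonNBounded 𝕜
  -- `WeakDual.isBounded_iff_isVonNBounded` is the Banach–Steinhaus theorem on the dual of `E`.
  have hbdd : IsBounded (NormedSpace.inclusionInDoubleDual 𝕜 E '' S) := by
    have := WeakDual.isBounded_iff_isVonNBounded.2 hvN
    rwa [image_image] at this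
  exact (NormedSpace.inclusionInDoubleDualLi (𝕜 := 𝕜) (E := E)).antilipschitz.isBounded_preimage
    hbdd |>.subset (subset_preimage_image _ _)

theorem isCompact_image_toWeakSpaceCLM_image (f : E →L[𝕜] F) {K : Set E}
    (hK : IsCompact (toWeakSpaceCLM 𝕜 E '' K)) :
    IsCompact (toWeakSpaceCLM 𝕜 F '' (f '' K)) := by
  have := hK.image (WeakSpace.map f).continuous
  rw [image_image] at this ⊢
  exact this

theorem range_subset_closure_span_image (f : E →L[𝕜] F) {K : Set E}
    (hK : Dense (Submodule.span 𝕜 K : Set E)) :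
    range f ⊆ closure (Submodule.span 𝕜 (f '' K)) := by
  have hspan := Submodule.span_image (f : E →ₗ[𝕜] F) (s := K)
  rw [ContinuousLinearMap.coe_coe] at hspan
  rw [hspan, Submodule.map_coe, ← image_univ, ← hK.closure_eq]
  exact image_closure_subset_closure_image f.continuous

end WeakTopology

theorem wcg_of_seq_of_wcg_subspaces
    {𝕜 : Type*} [RCLike 𝕜] {X : Type*} [NormedAddCommGroup X] [NormedSpace 𝕜 X]
    (Y : ℕ → Submodule 𝕜 X)
    (hwcg : ∀ n, ∃ K : Set ↥(Y n),
      IsCompact (toWeakSpaceCLM 𝕜 ↥(Y n) '' K) ∧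
      Dense (Submodule.span 𝕜 K : Set ↥(Y n)))
    (hdense : Dense (Submodule.span 𝕜 (⋃ n, (Y n : Set X)) : Set X)) :
    ∃ K : Set X, IsCompact (toWeakSpaceCLM 𝕜 X '' K) ∧
      Dense (Submodule.span 𝕜 K : Set X) := by
  choose K hKcompact hKdense using hwcg
  set A : ℕ → Set X := fun n ↦ (Y n).subtypeL '' K n
  have hAcompact n : IsCompact (toWeakSpaceCLM 𝕜 X '' A n) :=
    isCompact_image_toWeakSpaceCLM_image _ (hKcompact n)
  obtain ⟨c, hc0, hc⟩ := exists_ne_zero_smul_tendsto_smallSets fun n ↦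
    (NormedSpace.isVonNBounded_iff 𝕜).2 (isBounded_of_isCompact_image_toWeakSpaceCLM (hAcompact n))
  set G := insert 0 (⋃ n, c n • A n)
  refine ⟨G, ?_, ?_⟩
  · rw [image_insert_eq, map_zero, image_iUnion]
    refine isCompact_insert_iUnion_of_tendsto_smallSets (fun n ↦ ?_) ?_
    · rw [image_smul_set]
      exact (hAcompact n).smul (c n)
    · exact ((toWeakSpaceCLM 𝕜 X).continuous.tendsto' 0 0 (map_zero _)).image_smallSets.comp hc
  · have hY n : (Y n : Set X) ⊆ closure (Submodule.span 𝕜 G) := by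
      have hA : Submodule.span 𝕜 (A n) ≤ Submodule.span 𝕜 G := by
        rw [← Submodule.span_smul_eq_of_isUnit _ _ (hc0 n).isUnit]
        exact Submodule.span_mono ((subset_iUnion (fun n ↦ c n • A n) n).trans (subset_insert _ _))
      simpa using (range_subset_closure_span_image (Y n).subtypeL (hKdense n)).trans
        (closure_mono hA)
    have := hdense.mono <| SetLike.coe_subset_coe.2 <|
      (Submodule.span_le (p := (Submodule.span 𝕜 G).topologicalClosure)).2 (iUnion_subset hY)
    rwa [Submodule.topologicalClosure_coe, dense_closure] at this
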